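/- arXiv:1707.02020 — 3 statements merged into one kernel-verified Lean document; each statement's English description precedes it below -/
import Mathlib

section
/- Let Γ be a group acting measurably on a Borel space X, and let ρ : Γ × X → ℝ be a Borel cocycle (i.e., ρ(gh, x) = ρ(g, h·x) + ρ(h, x) for all g, h ∈ Γ and x ∈ X). If for every x ∈ X there is a constant C(x) < ∞ with |ρ(g, x)| ≤ C(x) for all g ∈ Γ, then ρ is a coboundary: there exists a Borel function φ : X → ℝ with |φ(x)| ≤ 2C(x) such that ρ(g, x) = φ(g·x) − φ(x) for all g and x. -/
/-- Lemma (bounded cocycles are coboundaries, pointwise bounded version).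
If `ρ : Γ × X → ℝ` is a Borel cocycle over a measurable action of a countable
group `Γ` on a Borel space `X`, and `|ρ(g,x)| ≤ C(x)` for all `g`, then `ρ` is
the coboundary of a Borel function `φ` with `|φ| ≤ 2C`. -/
theorem bounded_cocycle_is_coboundary_pointwise
    {G X : Type*} [Group G] [Countable G] [MeasurableSpace X] [MulAction G X]
    (hact : ∀ g : G, Measurable (fun x : X => g • x))
    (ρ : G → X → ℝ) (hρmeas : ∀ g : G, Measurable (ρ g))
    (hcoc : ∀ (g h : G) (x : X), ρ (g * h) x = ρ g (h • x) + ρ h x)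
    (C : X → ℝ) (hbd : ∀ (g : G) (x : X), |ρ g x| ≤ C x) :
    ∃ φ : X → ℝ, Measurable φ ∧ (∀ x : X, |φ x| ≤ 2 * C x) ∧
      ∀ (g : G) (x : X), ρ g x = φ (g • x) - φ x := by
  have hone : ∀ x : X, ρ 1 x = 0 := by
    intro x
    have := hcoc 1 1 x
    simp at this
    linarith
  set S : X → ℝ := fun x => ⨆ h : G, ρ h x with hS
  have hbdd : ∀ x : X, BddAbove (Set.range fun h : G => ρ h x) := by
    intro x
    exact ⟨C x, by rintro _ ⟨h, rfl⟩; exact (abs_le.mp (hbd h x)).2⟩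
  have hSle : ∀ x : X, S x ≤ C x := fun x =>
    ciSup_le fun h => (abs_le.mp (hbd h x)).2
  have hSge : ∀ x : X, 0 ≤ S x := fun x => by
    have := le_ciSup (hbdd x) (1 : G)
    simpa [hone x] using this
  have hkey : ∀ (g : G) (x : X), S (g • x) = S x - ρ g x := by
    intro g x
    have h1 : ∀ h : G, ρ h (g • x) = ρ (h * g) x - ρ g x := by
      intro h
      have := hcoc h g x
      linarith
    apply le_antisymm
    · apply ciSup_le
      intro h
      rw [h1 h]
      have := le_ciSup (hbdd x) (h * g)
      linarith
    · rw [sub_le_iff_le_add]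
      apply ciSup_le
      intro h
      have := le_ciSup (hbdd (g • x)) (h * g⁻¹)
      rw [h1 (h * g⁻¹)] at this
      simp at this
      linarith
  refine ⟨fun x => -S x, ?_, ?_, ?_⟩
  · exact (Measurable.iSup fun h : G => hρmeas h).neg
  · intro x
    have hC : 0 ≤ C x := le_trans (abs_nonneg _) (hbd 1 x)
    rw [abs_neg, abs_of_nonneg (hSge x)]
    linarith [hSle x]
  · intro g x
    have := hkey g x
    simp only
    linarith
end

section
/- Let Γ be a group acting measurably on a Borel space X and ρ : Γ × X → ℝ a Borel cocycle. If ρ is uniformly bounded, i.e., there is C < ∞ with |ρ(g, x)| ≤ C for all g ∈ Γ and x ∈ X, then ρ(g, x) = φ(g·x) − φ(x) for some bounded Borel function φ : X → ℝ with |φ| ≤ 2C. -/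
/-- Lemma (uniformly bounded cocycles are coboundaries of bounded functions). -/
theorem bounded_cocycle_is_coboundary_uniform
    {G X : Type*} [Group G] [Countable G] [MeasurableSpace X] [MulAction G X]
    (hact : ∀ g : G, Measurable (fun x : X => g • x))
    (ρ : G → X → ℝ) (hρmeas : ∀ g : G, Measurable (ρ g))
    (hcoc : ∀ (g h : G) (x : X), ρ (g * h) x = ρ g (h • x) + ρ h x)
    (C : ℝ) (hbd : ∀ (g : G) (x : X), |ρ g x| ≤ C) :
    ∃ φ : X → ℝ, Measurable φ ∧ (∀ x : X, |φ x| ≤ 2 * C) ∧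
      ∀ (g : G) (x : X), ρ g x = φ (g • x) - φ x := by
  rcases isEmpty_or_nonempty X with hX | hX
  · exact ⟨0, measurable_const, fun x => (IsEmpty.false x).elim,
      fun g x => (IsEmpty.false x).elim⟩
  have hC : 0 ≤ C := (abs_nonneg _).trans (hbd 1 (Classical.arbitrary X))
  set φ : X → ℝ := fun x => -(⨆ g : G, ρ g x) with hφ
  have hbdd : ∀ x : X, BddAbove (Set.range fun g : G => ρ g x) := by
    intro x
    exact ⟨C, by rintro - ⟨g, rfl⟩; exact (abs_le.1 (hbd g x)).2⟩
  have hsup_le : ∀ x : X, (⨆ g : G, ρ g x) ≤ C := fun x =>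
    ciSup_le fun g => (abs_le.1 (hbd g x)).2
  have hsup_ge : ∀ x : X, -C ≤ (⨆ g : G, ρ g x) := fun x =>
    le_trans (abs_le.1 (hbd 1 x)).1 (le_ciSup (hbdd x) 1)
  refine ⟨φ, ?_, ?_, ?_⟩
  · exact (Measurable.iSup fun g => hρmeas g).neg
  · intro x
    have h1 := hsup_le x
    have h2 := hsup_ge x
    rw [hφ, abs_neg, abs_le]
    set s := (⨆ g : G, ρ g x) with hs
    constructor <;> linarith
  · intro g x
    have key : (⨆ h : G, ρ h (g • x)) = (⨆ h : G, ρ h x) - ρ g x := by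
      have h1 : ∀ h : G, ρ h (g • x) = ρ (h * g) x - ρ g x := by
        intro h; rw [hcoc h g x]; ring
      have h2 : (⨆ h : G, ρ (h * g) x) = ⨆ h : G, ρ h x := by
        apply congrArg sSup
        ext y
        constructor
        · rintro ⟨h, rfl⟩; exact ⟨h * g, rfl⟩
        · rintro ⟨h, rfl⟩; exact ⟨h * g⁻¹, by simp⟩
      have e := (OrderIso.addRight (-(ρ g x))).map_ciSup
        (f := fun h : G => ρ (h * g) x)
        ⟨C, by rintro - ⟨h, rfl⟩; exact (abs_le.1 (hbd (h * g) x)).2⟩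
      simp only [OrderIso.addRight_apply] at e
      calc (⨆ h : G, ρ h (g • x)) = ⨆ h : G, (ρ (h * g) x + -(ρ g x)) := by
            simp only [h1, sub_eq_add_neg]
        _ = (⨆ h : G, ρ (h * g) x) + -(ρ g x) := e.symm
        _ = (⨆ h : G, ρ h x) - ρ g x := by rw [h2, sub_eq_add_neg]
    show ρ g x = -(⨆ h : G, ρ h (g • x)) - -(⨆ h : G, ρ h x)
    rw [key]; ring
end

section
/- Let Γ act on a standard probability space (X, μ) preserving the measure class, and suppose the action is metrically ergodic. Then for every ergodic probability-measure-preserving Γ-action on (Ω, ω), the diagonal Γ-action on (X × Ω, μ × ω) is ergodic (i.e., the action is weakly mixing). -/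
open MeasureTheory

universe u v

theorem measurable_of_dist_meas {α S : Type*} [MeasurableSpace α] [MetricSpace S]
    [TopologicalSpace.SeparableSpace S] [MeasurableSpace S] [BorelSpace S]
    {F : α → S} (h : ∀ s : S, Measurable fun x => dist (F x) s) : Measurable F := by
  obtain ⟨D, hDc, hDd⟩ := TopologicalSpace.exists_countable_dense S
  apply measurable_of_isOpen
  intro U hU
  have key : F ⁻¹' U = ⋃ s ∈ D, ⋃ q : ℚ, ⋃ (_ : Metric.ball s (q : ℝ) ⊆ U),
      {x | dist (F x) s < (q : ℝ)} := by
    ext x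
    simp only [Set.mem_preimage, Set.mem_iUnion, Set.mem_setOf_eq]
    constructor
    · intro hx
      obtain ⟨ε, hε, hball⟩ := Metric.isOpen_iff.mp hU _ hx
      obtain ⟨s, hsD, hs⟩ := hDd.exists_dist_lt (F x) (by linarith : (0:ℝ) < ε / 2)
      obtain ⟨q, hq1, hq2⟩ := exists_rat_btwn (by linarith : dist (F x) s < ε - dist (F x) s)
      refine ⟨s, hsD, q, ?_, hq1⟩
      intro y hy
      apply hball
      have hds : dist s (F x) < ε / 2 := by rwa [dist_comm]
      calc dist y (F x) ≤ dist y s + dist s (F x) := dist_triangle _ _ _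
        _ < (q : ℝ) + dist s (F x) := by
            have := Metric.mem_ball.mp hy; linarith
        _ < ε := by rw [dist_comm s (F x)]; linarith
    · rintro ⟨s, _, q, hsub, hx⟩
      exact hsub (Metric.mem_ball.mpr hx)
  rw [key]
  refine MeasurableSet.biUnion hDc fun s _ => MeasurableSet.iUnion fun q =>
    MeasurableSet.iUnion fun _ => ?_
  exact measurableSet_lt (h s) measurable_const

theorem aux_core
    {G : Type*} {X : Type u} [Group G] [Countable G] [MeasurableSpace X] [MulAction G X]
    (hmX : ∀ g : G, Measurable (fun x : X => g • x))
    (μ : Measure X) [IsProbabilityMeasure μ]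
    (hME : ∀ (S : Type v) [MetricSpace S] [MeasurableSpace S] [BorelSpace S],
      TopologicalSpace.SeparableSpace S →
      ∀ a : G → S → S, (∀ g : G, Isometry (a g)) →
        (∀ (g h : G) (s : S), a (g * h) s = a g (a h s)) → (∀ s : S, a 1 s = s) →
        ∀ F : X → S, Measurable F → (∀ g : G, ∀ᵐ x ∂μ, F (g • x) = a g (F x)) →
          ∃ s₀ : S, (∀ g : G, a g s₀ = s₀) ∧ (∀ᵐ x ∂μ, F x = s₀))
    {Ω : Type v} [MeasurableSpace Ω] [MeasurableSpace.CountablyGenerated Ω] [MulAction G Ω]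
    (hmΩ : ∀ g : G, Measurable (fun p : Ω => g • p))
    (ω : Measure Ω) [IsProbabilityMeasure ω]
    (hpmp : ∀ g : G, MeasurePreserving (fun p : Ω => g • p) ω ω)
    (herg : ∀ B : Set Ω, MeasurableSet B →
      (∀ g : G, ω (symmDiff ((fun p : Ω => g • p) ⁻¹' B) B) = 0) → ω B = 0 ∨ ω Bᶜ = 0)
    (E : Set (X × Ω)) (hE : MeasurableSet E)
    (hEinv : ∀ g : G, (μ.prod ω) (symmDiff ((fun q : X × Ω => g • q) ⁻¹' E) E) = 0) :
    (μ.prod ω) E = 0 ∨ (μ.prod ω) Eᶜ = 0 := by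
  haveI : Fact ((1:ENNReal) ≤ 1) := ⟨le_rfl⟩
  haveI : Fact ((1:ENNReal) ≠ ⊤) := ⟨ENNReal.one_ne_top⟩
  letI : MeasurableSpace (Lp ℝ 1 ω) := borel _
  haveI : BorelSpace (Lp ℝ 1 ω) := ⟨rfl⟩
  set a : G → Lp ℝ 1 ω → Lp ℝ 1 ω :=
    fun g f => Lp.compMeasurePreserving (fun p : Ω => g⁻¹ • p) (hpmp g⁻¹) f with ha_def
  have hacoe : ∀ (g : G) (f : Lp ℝ 1 ω),
      (a g f : Ω → ℝ) =ᵐ[ω] (f : Ω → ℝ) ∘ (fun p : Ω => g⁻¹ • p) :=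
    fun g f => Lp.coeFn_compMeasurePreserving f (hpmp g⁻¹)
  have ha_iso : ∀ g : G, Isometry (a g) := fun g =>
    Lp.isometry_compMeasurePreserving (hpmp g⁻¹)
  have ha_mul : ∀ (g h : G) (s : Lp ℝ 1 ω), a (g * h) s = a g (a h s) := by
    intro g h s
    apply Lp.ext
    have h1 := hacoe (g * h) s
    have h2 := hacoe g (a h s)
    have h3 : ((a h s : Ω → ℝ) ∘ fun p : Ω => g⁻¹ • p) =ᵐ[ω]
        (((s : Ω → ℝ) ∘ fun p : Ω => h⁻¹ • p) ∘ fun p : Ω => g⁻¹ • p) :=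
      (hpmp g⁻¹).quasiMeasurePreserving.ae_eq (hacoe h s)
    have h4 : ((s : Ω → ℝ) ∘ fun p : Ω => (g * h)⁻¹ • p) =
        (((s : Ω → ℝ) ∘ fun p : Ω => h⁻¹ • p) ∘ fun p : Ω => g⁻¹ • p) := by
      funext p
      simp only [Function.comp_apply]
      rw [mul_inv_rev, mul_smul]
    exact h1.trans ((Filter.EventuallyEq.of_eq h4).trans (h3.symm.trans h2.symm))
  have ha_one : ∀ s : Lp ℝ 1 ω, a 1 s = s := by
    intro s
    apply Lp.ext
    refine (hacoe 1 s).trans (Filter.EventuallyEq.of_eq ?_)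
    funext p
    simp only [Function.comp_apply, inv_one, one_smul]
  have hsec : ∀ x : X, MeasurableSet (Prod.mk x ⁻¹' E) := fun x => measurable_prodMk_left hE
  set F : X → Lp ℝ 1 ω := fun x =>
    indicatorConstLp 1 (hsec x) (measure_ne_top ω _) (1:ℝ) with hF_def
  have hFcoe : ∀ x : X, (F x : Ω → ℝ) =ᵐ[ω] (Prod.mk x ⁻¹' E).indicator (fun _ => (1:ℝ)) :=
    fun x => indicatorConstLp_coeFn
  have hF : Measurable F := by
    apply measurable_of_dist_meas
    intro s
    have hkey : (fun x => dist (F x) s) = fun x =>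
        (∫⁻ p, (‖E.indicator (fun _ => (1:ℝ)) (x, p) - s p‖₊ : ENNReal) ∂ω).toReal := by
      funext x
      rw [Lp.dist_def, eLpNorm_one_eq_lintegral_enorm]
      congr 1
      apply lintegral_congr_ae
      filter_upwards [hFcoe x] with p h2
      simp only [Pi.sub_apply, h2]
      rfl
    rw [hkey]
    apply Measurable.ennreal_toReal
    apply Measurable.lintegral_prod_right'
      (f := fun q : X × Ω => (‖E.indicator (fun _ => (1:ℝ)) q - s q.2‖₊ : ENNReal))
    apply measurable_coe_nnreal_ennreal.comp
    apply Measurable.nnnorm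
    exact (measurable_const.indicator hE).sub
      ((Lp.stronglyMeasurable s).measurable.comp measurable_snd)
  have hFequiv : ∀ g : G, ∀ᵐ x ∂μ, F (g • x) = a g (F x) := by
    intro g
    have hgmeas : Measurable (fun q : X × Ω => g • q) :=
      ((hmX g).comp measurable_fst).prodMk ((hmΩ g).comp measurable_snd)
    have hMmeas : MeasurableSet (symmDiff ((fun q : X × Ω => g • q) ⁻¹' E) E) :=
      (hgmeas hE).symmDiff hE
    have hae := Measure.measure_ae_null_of_prod_null (hEinv g)
    filter_upwards [hae] with x hx
    have hx0 : ω (Prod.mk x ⁻¹' (symmDiff ((fun q : X × Ω => g • q) ⁻¹' E) E)) = 0 := hx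
    have hAB : ω (symmDiff (Prod.mk (g • x) ⁻¹' E)
        ((fun p : Ω => g⁻¹ • p) ⁻¹' (Prod.mk x ⁻¹' E))) = 0 := by
      have hsub : symmDiff (Prod.mk (g • x) ⁻¹' E)
          ((fun p : Ω => g⁻¹ • p) ⁻¹' (Prod.mk x ⁻¹' E)) =
          (fun p : Ω => g⁻¹ • p) ⁻¹'
            (Prod.mk x ⁻¹' (symmDiff ((fun q : X × Ω => g • q) ⁻¹' E) E)) := by
        ext p
        simp only [Set.mem_symmDiff, Set.mem_preimage, Prod.smul_def, smul_inv_smul]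
      rw [hsub]
      exact (hpmp g⁻¹).quasiMeasurePreserving.preimage_null hx0
    have hind : (Prod.mk (g • x) ⁻¹' E).indicator (fun _ => (1:ℝ)) =ᵐ[ω]
        ((fun p : Ω => g⁻¹ • p) ⁻¹' (Prod.mk x ⁻¹' E)).indicator (fun _ => (1:ℝ)) := by
      filter_upwards [measure_eq_zero_iff_ae_notMem.mp hAB] with p hp
      rw [Set.mem_symmDiff] at hp
      have hiff : p ∈ Prod.mk (g • x) ⁻¹' E ↔
          p ∈ (fun p : Ω => g⁻¹ • p) ⁻¹' (Prod.mk x ⁻¹' E) := by tauto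
      by_cases h1 : p ∈ Prod.mk (g • x) ⁻¹' E
      · rw [Set.indicator_of_mem h1, Set.indicator_of_mem (hiff.mp h1)]
      · rw [Set.indicator_of_notMem h1,
          Set.indicator_of_notMem (fun hc => h1 (hiff.mpr hc))]
    have hcoe2 : (a g (F x) : Ω → ℝ) =ᵐ[ω]
        ((fun p : Ω => g⁻¹ • p) ⁻¹' (Prod.mk x ⁻¹' E)).indicator (fun _ => (1:ℝ)) := by
      refine (hacoe g (F x)).trans ?_
      refine ((hpmp g⁻¹).quasiMeasurePreserving.ae_eq (hFcoe x)).trans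
        (Filter.EventuallyEq.of_eq ?_)
      funext p
      by_cases hp : g⁻¹ • p ∈ Prod.mk x ⁻¹' E <;>
        simp [Set.indicator, hp]
    exact Lp.ext ((hFcoe (g • x)).trans (hind.trans hcoe2.symm))
  obtain ⟨s₀, hs₀inv, hs₀⟩ :=
    hME (Lp ℝ 1 ω) inferInstance a ha_iso ha_mul ha_one F hF hFequiv
  set B : Set Ω := {p : Ω | (1:ℝ)/2 ≤ (s₀ : Ω → ℝ) p} with hB_def
  have hB : MeasurableSet B := (Lp.stronglyMeasurable s₀).measurable measurableSet_Ici
  have hBinv : ∀ g : G, ω (symmDiff ((fun p : Ω => g • p) ⁻¹' B) B) = 0 := by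
    intro g
    have h1 : a g⁻¹ s₀ = s₀ := hs₀inv g⁻¹
    have h2 : ((s₀ : Ω → ℝ) ∘ fun p : Ω => g • p) =ᵐ[ω] (s₀ : Ω → ℝ) := by
      have h3 := hacoe g⁻¹ s₀
      rw [h1, inv_inv] at h3
      exact h3.symm
    have h3 : ω {p : Ω | ¬ ((s₀ : Ω → ℝ) ∘ fun p : Ω => g • p) p = (s₀ : Ω → ℝ) p} = 0 :=
      ae_iff.mp h2
    apply measure_mono_null _ h3
    intro p hp
    rw [Set.mem_symmDiff] at hp
    simp only [Set.mem_setOf_eq, Function.comp_apply]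
    intro heq
    have hiff : p ∈ (fun p : Ω => g • p) ⁻¹' B ↔ p ∈ B := by
      simp only [Set.mem_preimage, hB_def, Set.mem_setOf_eq, heq]
    tauto
  rcases herg B hB hBinv with hB0 | hB1
  · left
    rw [Measure.measure_prod_null hE]
    have hnB : ∀ᵐ p ∂ω, p ∉ B := measure_eq_zero_iff_ae_notMem.mp hB0
    filter_upwards [hs₀] with x hx
    have hcoe : (Prod.mk x ⁻¹' E).indicator (fun _ => (1:ℝ)) =ᵐ[ω] (s₀ : Ω → ℝ) := by
      have h1 := hFcoe x
      rw [hx] at h1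
      exact h1.symm
    have hmem : ∀ᵐ p ∂ω, p ∉ Prod.mk x ⁻¹' E := by
      filter_upwards [hcoe, hnB] with p h1 h2
      intro hpE
      apply h2
      have h3 : (1:ℝ) = (s₀ : Ω → ℝ) p := by
        rw [← h1, Set.indicator_of_mem hpE]
      show (1:ℝ)/2 ≤ (s₀ : Ω → ℝ) p
      rw [← h3]; norm_num
    simpa using measure_eq_zero_iff_ae_notMem.mpr hmem
  · right
    rw [Measure.measure_prod_null hE.compl]
    have hnB : ∀ᵐ p ∂ω, p ∈ B := by
      filter_upwards [measure_eq_zero_iff_ae_notMem.mp hB1] with p hp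
      simpa using hp
    filter_upwards [hs₀] with x hx
    have hcoe : (Prod.mk x ⁻¹' E).indicator (fun _ => (1:ℝ)) =ᵐ[ω] (s₀ : Ω → ℝ) := by
      have h1 := hFcoe x
      rw [hx] at h1
      exact h1.symm
    have hmem : ∀ᵐ p ∂ω, p ∉ Prod.mk x ⁻¹' Eᶜ := by
      filter_upwards [hcoe, hnB] with p h1 h2
      intro hpE
      have hpE' : p ∉ Prod.mk x ⁻¹' E := hpE
      have h3 : (0:ℝ) = (s₀ : Ω → ℝ) p := by
        rw [← h1, Set.indicator_of_notMem hpE']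
      have h4 : (1:ℝ)/2 ≤ (s₀ : Ω → ℝ) p := h2
      rw [← h3] at h4
      norm_num at h4
    simpa using measure_eq_zero_iff_ae_notMem.mpr hmem

/-- Any set measurable for the σ-algebra generated by `C` is measurable for the σ-algebra
generated by a countable subfamily of `C`. -/
theorem measurableSet_generateFrom_countable {α : Type*} {C : Set (Set α)} {s : Set α}
    (hs : MeasurableSet[MeasurableSpace.generateFrom C] s) :
    ∃ t ⊆ C, t.Countable ∧ MeasurableSet[MeasurableSpace.generateFrom t] s := by
  induction s, hs using MeasurableSpace.generateFrom_induction with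
  | hC u hu _ =>
    refine ⟨{u}, by simpa, Set.countable_singleton u, ?_⟩
    exact MeasurableSpace.measurableSet_generateFrom rfl
  | empty => exact ⟨∅, by simp, Set.countable_empty, @MeasurableSet.empty _ (MeasurableSpace.generateFrom ∅)⟩
  | compl u _ ih =>
    obtain ⟨t, h1, h2, h3⟩ := ih
    exact ⟨t, h1, h2, h3.compl⟩
  | iUnion f _ ih =>
    choose t h1 h2 h3 using ih
    refine ⟨⋃ n, t n, Set.iUnion_subset h1, Set.countable_iUnion h2,
      MeasurableSet.iUnion fun n => ?_⟩
    exact MeasurableSpace.generateFrom_mono (Set.subset_iUnion t n) _ (h3 n)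


/-- Theorem (metric ergodicity implies weak mixing).
If a measure-class-preserving action `Γ ↷ (X, μ)` is metrically ergodic, then for every
ergodic probability-measure-preserving action `Γ ↷ (Ω, ω)` the diagonal action on
`(X × Ω, μ × ω)` is ergodic. -/
theorem metrically_ergodic_implies_weakly_mixing
    {G : Type*} {X : Type u} [Group G] [Countable G] [MeasurableSpace X] [MulAction G X]
    (hmX : ∀ g : G, Measurable (fun x : X => g • x))
    (μ : Measure X) [IsProbabilityMeasure μ]
    (hqi : ∀ g : G, μ.map (fun x : X => g • x) ≪ μ ∧ μ ≪ μ.map (fun x : X => g • x))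
    -- metric ergodicity of `Γ ↷ (X, μ)`
    (hME : ∀ (S : Type v) [MetricSpace S] [MeasurableSpace S] [BorelSpace S],
      TopologicalSpace.SeparableSpace S →
      ∀ a : G → S → S, (∀ g : G, Isometry (a g)) →
        (∀ (g h : G) (s : S), a (g * h) s = a g (a h s)) → (∀ s : S, a 1 s = s) →
        ∀ F : X → S, Measurable F → (∀ g : G, ∀ᵐ x ∂μ, F (g • x) = a g (F x)) →
          ∃ s₀ : S, (∀ g : G, a g s₀ = s₀) ∧ (∀ᵐ x ∂μ, F x = s₀))
    -- an ergodic p.m.p. action `Γ ↷ (Ω, ω)`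
    {Ω : Type v} [MeasurableSpace Ω] [MulAction G Ω]
    (hmΩ : ∀ g : G, Measurable (fun p : Ω => g • p))
    (ω : Measure Ω) [IsProbabilityMeasure ω]
    (hpmp : ∀ g : G, MeasurePreserving (fun p : Ω => g • p) ω ω)
    (herg : ∀ B : Set Ω, MeasurableSet B →
      (∀ g : G, ω (symmDiff ((fun p : Ω => g • p) ⁻¹' B) B) = 0) → ω B = 0 ∨ ω Bᶜ = 0) :
    -- conclusion: the diagonal action on `(X × Ω, μ × ω)` is ergodic
    ∀ E : Set (X × Ω), MeasurableSet E →
      (∀ g : G, (μ.prod ω) (symmDiff ((fun q : X × Ω => g • q) ⁻¹' E) E) = 0) →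
      (μ.prod ω) E = 0 ∨ (μ.prod ω) Eᶜ = 0 := by
  intro E hE hEinv
  classical
  have hE' : MeasurableSet[MeasurableSpace.generateFrom
      (Set.image2 (· ×ˢ ·) {s : Set X | MeasurableSet s} {t : Set Ω | MeasurableSet t})] E := by
    rw [generateFrom_prod]; exact hE
  obtain ⟨t, htsub, htc, htE⟩ := measurableSet_generateFrom_countable hE'
  have hchoice : ∀ u ∈ t, ∃ (A : Set X) (B : Set Ω),
      MeasurableSet A ∧ MeasurableSet B ∧ u = A ×ˢ B := by
    intro u hu
    obtain ⟨A, hA, B, hB, heq⟩ := htsub hu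
    exact ⟨A, B, hA, hB, heq.symm⟩
  choose! Afn Bfn hAmeas hBmeas huAB using hchoice
  set C : Set (Set Ω) := Bfn '' t with hC_def
  have hCc : C.Countable := htc.image _
  have hCmeas : ∀ B ∈ C, MeasurableSet B := by
    rintro B ⟨u, hu, rfl⟩; exact hBmeas u hu
  set D : Set (Set Ω) := ⋃ g : G, (fun B => (fun p : Ω => g • p) ⁻¹' B) '' C with hD_def
  have hDc : D.Countable := Set.countable_iUnion fun g => hCc.image _
  have hmle : MeasurableSpace.generateFrom D ≤ ‹MeasurableSpace Ω› := by
    apply MeasurableSpace.generateFrom_le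
    rintro s hs
    simp only [hD_def, Set.mem_iUnion, Set.mem_image] at hs
    obtain ⟨g, B, hB, rfl⟩ := hs
    exact hmΩ g (hCmeas B hB)
  have hcg : @MeasurableSpace.CountablyGenerated Ω (MeasurableSpace.generateFrom D) :=
    @MeasurableSpace.CountablyGenerated.mk Ω (MeasurableSpace.generateFrom D) ⟨D, hDc, rfl⟩
  have hmono : ∀ s : Set Ω, MeasurableSet[(MeasurableSpace.generateFrom D)] s → MeasurableSet s := fun s hs =>
    MeasurableSpace.le_def.mp hmle s hs
  have hmΩ' : ∀ g : G, @Measurable Ω Ω (MeasurableSpace.generateFrom D) (MeasurableSpace.generateFrom D) (fun p => g • p) := by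
    intro g
    have hgen : ∀ u ∈ D, MeasurableSet[(MeasurableSpace.generateFrom D)] ((fun p : Ω => g • p) ⁻¹' u) := by
      rintro u hu
      simp only [hD_def, Set.mem_iUnion, Set.mem_image] at hu
      obtain ⟨h, B, hB, rfl⟩ := hu
      have heq : (fun p : Ω => g • p) ⁻¹' ((fun p : Ω => h • p) ⁻¹' B) =
          (fun p : Ω => (h * g) • p) ⁻¹' B := by
        ext p; simp [mul_smul]
      rw [heq]
      apply MeasurableSpace.measurableSet_generateFrom
      rw [hD_def]
      exact Set.mem_iUnion.mpr ⟨h * g, Set.mem_image_of_mem _ hB⟩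
    exact @measurable_generateFrom Ω Ω (MeasurableSpace.generateFrom D) D _ hgen
  have hmemC : ∀ B ∈ C, MeasurableSet[(MeasurableSpace.generateFrom D)] B := by
    intro B hB
    apply MeasurableSpace.measurableSet_generateFrom
    rw [hD_def]
    refine Set.mem_iUnion.mpr ⟨1, ⟨B, hB, ?_⟩⟩
    ext p; simp
  have hEm : MeasurableSet[@Prod.instMeasurableSpace X Ω _ (MeasurableSpace.generateFrom D)] E := by
    have hle2 : MeasurableSpace.generateFrom t ≤ @Prod.instMeasurableSpace X Ω _ (MeasurableSpace.generateFrom D) := by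
      apply MeasurableSpace.generateFrom_le
      intro u hu
      rw [huAB u hu]
      exact @MeasurableSet.prod X Ω _ (MeasurableSpace.generateFrom D) _ _ (hAmeas u hu)
        (hmemC (Bfn u) (Set.mem_image_of_mem _ hu))
    exact MeasurableSpace.le_def.mp hle2 E htE
  have hprob : IsProbabilityMeasure (ω.trim hmle) := by
    constructor
    rw [trim_measurableSet_eq hmle (@MeasurableSet.univ Ω (MeasurableSpace.generateFrom D))]
    exact measure_univ
  haveI := hprob
  have hpmp' : ∀ g : G, @MeasurePreserving Ω Ω (MeasurableSpace.generateFrom D) (MeasurableSpace.generateFrom D) (fun p => g • p)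
      (ω.trim hmle) (ω.trim hmle) := by
    intro g
    refine @MeasurePreserving.mk Ω Ω (MeasurableSpace.generateFrom D) (MeasurableSpace.generateFrom D) _ _ _ (hmΩ' g) ?_
    refine @Measure.ext Ω (MeasurableSpace.generateFrom D) _ _ fun s hs => ?_
    rw [@Measure.map_apply Ω Ω (MeasurableSpace.generateFrom D) (MeasurableSpace.generateFrom D) (ω.trim hmle) _ (hmΩ' g) s hs]
    rw [trim_measurableSet_eq hmle (hmΩ' g hs), trim_measurableSet_eq hmle hs]
    exact (hpmp g).measure_preimage (hmono s hs).nullMeasurableSet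
  have herg' : ∀ B : Set Ω, MeasurableSet[(MeasurableSpace.generateFrom D)] B →
      (∀ g : G, (ω.trim hmle) (symmDiff ((fun p : Ω => g • p) ⁻¹' B) B) = 0) →
      (ω.trim hmle) B = 0 ∨ (ω.trim hmle) Bᶜ = 0 := by
    intro B hBm hBinv
    have hsym : ∀ g : G, ω (symmDiff ((fun p : Ω => g • p) ⁻¹' B) B) = 0 := by
      intro g
      have hms : MeasurableSet[(MeasurableSpace.generateFrom D)] (symmDiff ((fun p : Ω => g • p) ⁻¹' B) B) :=
        (hmΩ' g hBm).symmDiff hBm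
      rw [← trim_measurableSet_eq hmle hms]
      exact hBinv g
    rcases herg B (hmono B hBm) hsym with h | h
    · left; rw [trim_measurableSet_eq hmle hBm]; exact h
    · right; rw [trim_measurableSet_eq hmle hBm.compl]; exact h
  have hprodeq : ∀ s : Set (X × Ω), MeasurableSet[@Prod.instMeasurableSpace X Ω _ (MeasurableSpace.generateFrom D)] s →
      @Measure.prod X Ω _ (MeasurableSpace.generateFrom D) μ (ω.trim hmle) s = (μ.prod ω) s := by
    intro s hs
    have hs' : MeasurableSet s := by
      have hle3 : @Prod.instMeasurableSpace X Ω _ (MeasurableSpace.generateFrom D) ≤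
          (Prod.instMeasurableSpace : MeasurableSpace (X × Ω)) := by
        show MeasurableSpace.prod _ (MeasurableSpace.generateFrom D) ≤ MeasurableSpace.prod _ _
        unfold MeasurableSpace.prod
        exact sup_le_sup le_rfl (MeasurableSpace.comap_mono hmle)
      exact MeasurableSpace.le_def.mp hle3 s hs
    haveI := hprob
    have hsfin : @SFinite Ω (MeasurableSpace.generateFrom D) (ω.trim hmle) := by infer_instance
    rw [@Measure.prod_apply X Ω _ (MeasurableSpace.generateFrom D) μ (ω.trim hmle) hsfin s hs, Measure.prod_apply hs']
    exact lintegral_congr fun x =>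
      trim_measurableSet_eq hmle (measurable_prodMk_left hs)
  have hEinv' : ∀ g : G, @Measure.prod X Ω _ (MeasurableSpace.generateFrom D) μ (ω.trim hmle)
      (symmDiff ((fun q : X × Ω => g • q) ⁻¹' E) E) = 0 := by
    intro g
    have hgm : @Measurable (X × Ω) (X × Ω) (@Prod.instMeasurableSpace X Ω _ (MeasurableSpace.generateFrom D))
        (@Prod.instMeasurableSpace X Ω _ (MeasurableSpace.generateFrom D)) (fun q => g • q) :=
      Measurable.prodMk ((hmX g).comp (@measurable_fst X Ω _ (MeasurableSpace.generateFrom D)))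
        ((hmΩ' g).comp (@measurable_snd X Ω _ (MeasurableSpace.generateFrom D)))
    rw [hprodeq _ ((hgm hEm).symmDiff hEm)]
    exact hEinv g
  rcases @aux_core G X _ _ _ _ hmX μ _ hME Ω (MeasurableSpace.generateFrom D) hcg _ hmΩ' (ω.trim hmle) hprob hpmp'
    herg' E hEm hEinv' with h | h
  · left; rw [← hprodeq E hEm]; exact h
  · right; rw [← hprodeq Eᶜ hEm.compl]; exact h
end
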